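/- arXiv:2004.00982 — 2 statements merged into one kernel-verified Lean document; each statement's English description precedes it below -/
import Mathlib

section
/- Let τ > 0, ρ > 0, 0 ≤ M < ρ, w₀ > 0, ε ∈ (0, w₀), and let w_ε : [0,T] → ℝ be a Lipschitz function satisfying τ w_ε'(t) + ρ sign_ε(w_ε(t)) = M for a.e. t ∈ (0,T) and w_ε(0) = w₀, where sign_ε(r) = r/ε for |r| ≤ ε and sign_ε(r) = r/|r| otherwise. Then 0 ≤ w_ε(t) ≤ w₀ for all t ∈ [0,T]. -/
open MeasureTheory Set Filter Topology

lemma key_mono {g g' : ℝ → ℝ} {K : NNReal} (hg : LipschitzWith K g) {a b : ℝ}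
    (hab : a ≤ b) {E : Set ℝ}
    (hE : ∀ t ∈ E, HasDerivAt g (g' t) t ∧ g' t ≤ 0)
    (hnull : volume (Icc a b \ E) = 0) : g b ≤ g a := by
  have hcg : Continuous g := hg.continuous
  have main : ∀ δ : ℝ, 0 < δ → g b - g a ≤ δ * (b - a) + ((K : ℝ) + δ) * δ := by
    intro δ hδ
    obtain ⟨U, hNU, hUopen, hUvol⟩ :=
      Set.exists_isOpen_lt_of_lt (Icc a b \ E) (ENNReal.ofReal δ)
        (by rw [hnull]; exact ENNReal.ofReal_pos.2 hδ)
    set m : ℝ → ℝ := fun t => (volume (U ∩ Ioo a t)).toReal with hm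
    have hfin : ∀ t, volume (U ∩ Ioo a t) ≠ ⊤ := fun t =>
      ((measure_mono inter_subset_left).trans_lt (hUvol.trans ENNReal.ofReal_lt_top)).ne
    have hmono : ∀ s t : ℝ, s ≤ t → m s ≤ m t := by
      intro s t hst
      exact ENNReal.toReal_mono (hfin t)
        (measure_mono (inter_subset_inter_right _ (Ioo_subset_Ioo_right hst)))
    have hlip : ∀ s t : ℝ, s ≤ t → m t - m s ≤ t - s := by
      intro s t hst
      have h1 : volume (U ∩ Ioo a t) ≤ volume (U ∩ Ioo a s) + volume (Ico s t) := by
        refine le_trans (measure_mono ?_) (measure_union_le _ _)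
        rintro x ⟨hxU, hx1, hx2⟩
        rcases lt_or_ge x s with h | h
        · exact Or.inl ⟨hxU, hx1, h⟩
        · exact Or.inr ⟨h, hx2⟩
      rw [Real.volume_Ico] at h1
      have h2 := ENNReal.toReal_mono
        (ENNReal.add_ne_top.2 ⟨hfin s, ENNReal.ofReal_ne_top⟩) h1
      rw [ENNReal.toReal_add (hfin s) ENNReal.ofReal_ne_top,
        ENNReal.toReal_ofReal (by linarith)] at h2
      simp only [hm] at *
      linarith
    have hmcont : Continuous m := by
      have hl1 : LipschitzWith 1 m := by
        apply LipschitzWith.of_dist_le_mul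
        intro s t
        rw [NNReal.coe_one, one_mul, Real.dist_eq, Real.dist_eq]
        rcases le_total s t with h | h
        · rw [abs_of_nonpos (by linarith [hmono s t h]), abs_of_nonpos (by linarith)]
          linarith [hlip s t h]
        · rw [abs_of_nonneg (by linarith [hmono t s h]), abs_of_nonneg (by linarith)]
          linarith [hlip t s h]
      exact hl1.continuous
    have hgrow : ∀ s t : ℝ, a ≤ s → s < t → Ioo s t ⊆ U → t - s ≤ m t - m s := by
      intro s t has hst hsub
      have hdisj : Disjoint (U ∩ Ioo a s) (Ioo s t) := by
        apply Set.disjoint_left.2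
        rintro x ⟨_, _, hx2⟩ ⟨hx3, _⟩
        exact absurd hx3 (not_lt.2 hx2.le)
      have hsub2 : (U ∩ Ioo a s) ∪ Ioo s t ⊆ U ∩ Ioo a t := by
        rintro x (⟨h1, h2, h3⟩ | ⟨h1, h2⟩)
        · exact ⟨h1, h2, h3.trans hst⟩
        · exact ⟨hsub ⟨h1, h2⟩, lt_of_le_of_lt has h1, h2⟩
      have hmeas := measure_mono (μ := volume) hsub2
      have hEq : volume ((U ∩ Ioo a s) ∪ Ioo s t) = volume (U ∩ Ioo a s) + volume (Ioo s t) :=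
        measure_union (μ := volume) hdisj measurableSet_Ioo
      rw [hEq, Real.volume_Ioo] at hmeas
      have h2 := ENNReal.toReal_mono (hfin t) hmeas
      rw [ENNReal.toReal_add (hfin s) ENNReal.ofReal_ne_top,
        ENNReal.toReal_ofReal (by linarith)] at h2
      simp only [hm] at *
      linarith
    set φ : ℝ → ℝ := fun t => g t - g a - δ * (t - a) - ((K : ℝ) + δ) * m t with hφ
    have hφcont : Continuous φ := by
      apply Continuous.sub
      apply Continuous.sub
      apply Continuous.sub hcg continuous_const
      · exact continuous_const.mul ((continuous_id.sub continuous_const))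
      · exact continuous_const.mul hmcont
    have hKδ : (0:ℝ) ≤ (K:ℝ) + δ := by positivity
    have hsub : Icc a b ⊆ {t | φ t ≤ 0} := by
      apply IsClosed.Icc_subset_of_forall_exists_gt
      · exact (isClosed_le hφcont continuous_const).inter isClosed_Icc
      · show φ a ≤ 0
        have : m a = 0 := by simp [hm]
        simp [hφ, this]
      · rintro x ⟨hxS, hxab⟩ y hy
        have hxS' : φ x ≤ 0 := hxS
        have hxIcc : x ∈ Icc a b := ⟨hxab.1, hxab.2.le⟩
        by_cases hxE : x ∈ E
        · obtain ⟨hd, hd0⟩ := hE x hxE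
          have hslope : Tendsto (slope g x) (𝓝[>] x) (𝓝 (g' x)) :=
            (hasDerivAt_iff_tendsto_slope.1 hd).mono_left
              (nhdsWithin_mono x fun u hu => ne_of_gt hu)
          have h1 : ∀ᶠ u in 𝓝[>] x, slope g x u < δ :=
            hslope.eventually_lt_const (by linarith)
          have h2 : ∀ᶠ u in 𝓝[>] x, u ∈ Ioc x y := Ioc_mem_nhdsGT_of_mem ⟨le_refl x, hy⟩
          obtain ⟨u, hu1, hu2⟩ := (h1.and h2).exists
          refine ⟨u, ?_, hu2⟩
          have hux : (0:ℝ) < u - x := by have := hu2.1; linarith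
          rw [slope_def_field, div_lt_iff₀ hux] at hu1
          have hmx := hmono x u hu2.1.le
          have hmul : ((K:ℝ) + δ) * m x ≤ ((K:ℝ) + δ) * m u :=
            mul_le_mul_of_nonneg_left hmx hKδ
          show φ u ≤ 0
          simp only [hφ] at hxS' ⊢
          nlinarith
        · have hxU : x ∈ U := hNU ⟨hxIcc, hxE⟩
          obtain ⟨η, hη, hball⟩ := Metric.isOpen_iff.1 hUopen x hxU
          set u := min (x + η/2) y with hu
          have hxu : x < u := lt_min (by linarith) hy
          have huy : u ≤ y := min_le_right _ _
          have hIoo : Ioo x u ⊆ U := by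
            intro z hz
            apply hball
            rw [Metric.mem_ball, Real.dist_eq, abs_of_pos (by linarith [hz.1])]
            have : z < x + η/2 := lt_of_lt_of_le hz.2 (min_le_left _ _)
            linarith
          have hgrow' := hgrow x u hxIcc.1 hxu hIoo
          have hgux : g u - g x ≤ (K:ℝ) * (u - x) := by
            have h1 := hg.dist_le_mul u x
            rw [Real.dist_eq, Real.dist_eq] at h1
            have h2 : |u - x| = u - x := abs_of_pos (by linarith)
            rw [h2] at h1
            calc g u - g x ≤ |g u - g x| := le_abs_self _
              _ ≤ (K:ℝ) * (u - x) := h1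
          have hmul : ((K:ℝ) + δ) * (u - x) ≤ ((K:ℝ) + δ) * (m u - m x) :=
            mul_le_mul_of_nonneg_left hgrow' hKδ
          refine ⟨u, ?_, hxu, huy⟩
          show φ u ≤ 0
          simp only [hφ] at hxS' ⊢
          nlinarith
    have hbS : φ b ≤ 0 := hsub (right_mem_Icc.2 hab)
    have hmb : m b ≤ δ := by
      refine ENNReal.toReal_le_of_le_ofReal hδ.le ?_
      exact le_trans (measure_mono inter_subset_left) hUvol.le
    have hmul : ((K:ℝ) + δ) * m b ≤ ((K:ℝ) + δ) * δ := mul_le_mul_of_nonneg_left hmb hKδ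
    simp only [hφ] at hbS
    linarith
  have htend : Tendsto (fun δ : ℝ => δ * (b - a) + ((K:ℝ) + δ) * δ) (𝓝[>] 0) (𝓝 0) := by
    have hc : Continuous fun δ : ℝ => δ * (b - a) + ((K:ℝ) + δ) * δ := by continuity
    have := (hc.tendsto 0).mono_left (nhdsWithin_le_nhds (s := Ioi (0:ℝ)))
    simpa using this
  have hle : g b - g a ≤ 0 := by
    refine ge_of_tendsto htend ?_
    filter_upwards [self_mem_nhdsWithin] with δ hδ
    exact main δ hδ
  linarith


/-- The Yosida approximation of the sign graph at level `ε`. -/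
noncomputable def signEps (ε r : ℝ) : ℝ := if |r| ≤ ε then r / ε else r / |r|

/-- If `w` is a Lipschitz (i.e. `W^{1,∞}`) solution of
`τ w' + ρ sign_ε(w) = M` a.e. on `(0,T)` with `w(0) = w₀ > 0`, where `0 ≤ M < ρ`
and `0 < ε < w₀`, then `0 ≤ w(t) ≤ w₀` on `[0,T]`. -/
theorem ode_solution_range (τ ρ M w₀ ε T : ℝ) (hτ : 0 < τ) (hρ : 0 < ρ)
    (hM0 : 0 ≤ M) (hMρ : M < ρ) (hw₀ : 0 < w₀) (hε : 0 < ε) (hεw₀ : ε < w₀)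
    (hT : 0 < T) (w w' : ℝ → ℝ) (K : NNReal) (hLip : LipschitzWith K w)
    (hode : ∀ᵐ t ∂(volume.restrict (Ioo 0 T)),
      HasDerivAt w (w' t) t ∧ τ * w' t + ρ * signEps ε (w t) = M)
    (hinit : w 0 = w₀) :
    ∀ t ∈ Icc 0 T, 0 ≤ w t ∧ w t ≤ w₀ := by
  set P : ℝ → Prop := fun t => HasDerivAt w (w' t) t ∧ τ * w' t + ρ * signEps ε (w t) = M
    with hP
  have hae : ∀ᵐ t, t ∈ Ioo 0 T → P t := (ae_restrict_iff' measurableSet_Ioo).mp hode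
  have hnullP : volume {t | t ∈ Ioo 0 T ∧ ¬ P t} = 0 := by
    have := hae
    rw [ae_iff] at this
    convert this using 2
    ext t
    simp only [mem_setOf_eq]
    tauto
  have hwc : Continuous w := hLip.continuous
  intro t₁ ht₁
  obtain ⟨ht₁0, ht₁T⟩ := ht₁
  constructor
  · -- lower bound 0 ≤ w t₁
    by_contra hcon
    push_neg at hcon
    set A : Set ℝ := Icc 0 t₁ ∩ {t | 0 ≤ w t} with hA
    have hAclosed : IsClosed A := isClosed_Icc.inter (isClosed_le continuous_const hwc)
    have hA0 : (0:ℝ) ∈ A := ⟨⟨le_refl 0, ht₁0⟩, by simp [hinit, hw₀.le]⟩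
    have hAbdd : BddAbove A := ⟨t₁, fun t ht => ht.1.2⟩
    set s₀ := sSup A with hs₀
    have hsmem : s₀ ∈ A := hAclosed.csSup_mem ⟨0, hA0⟩ hAbdd
    have hs0 : 0 ≤ s₀ := le_csSup hAbdd hA0
    have hst : s₀ < t₁ := lt_of_le_of_ne hsmem.1.2 (by
      intro h
      exact absurd (h ▸ hsmem.2) (not_le.2 hcon))
    have hneg : ∀ t ∈ Ioc s₀ t₁, w t < 0 := by
      intro t ⟨h1, h2⟩
      by_contra h
      push_neg at h
      have : t ∈ A := ⟨⟨le_trans hs0 h1.le, h2⟩, h⟩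
      exact absurd (le_csSup hAbdd this) (not_le.2 h1)
    set E : Set ℝ := Ioo s₀ t₁ ∩ {t | P t} with hE
    have hEderiv : ∀ t ∈ E, HasDerivAt (fun u => -w u) (-(w' t)) t ∧ -(w' t) ≤ 0 := by
      rintro t ⟨htI, htP⟩
      obtain ⟨hd, heq⟩ := htP
      refine ⟨hd.neg, ?_⟩
      have hwt : w t < 0 := hneg t ⟨htI.1, htI.2.le⟩
      have hsgn : signEps ε (w t) ≤ 0 := by
        unfold signEps
        split
        · rw [div_nonpos_iff]; right; exact ⟨hwt.le, hε.le⟩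
        · rw [abs_of_neg hwt, div_neg, div_self hwt.ne]
          norm_num
      nlinarith [mul_nonpos_of_nonneg_of_nonpos hρ.le hsgn]
    have hnullE : volume (Icc s₀ t₁ \ E) = 0 := by
      refine measure_mono_null (t := {s₀, t₁} ∪ {t | t ∈ Ioo 0 T ∧ ¬ P t}) ?_
        (measure_union_null (((Set.finite_singleton _).insert _).measure_zero _) hnullP)
      intro t ⟨htI, htE⟩
      rcases eq_or_lt_of_le htI.1 with h | h1
      · exact Or.inl (Or.inl h.symm)
      rcases eq_or_lt_of_le htI.2 with h | h2
      · exact Or.inl (Or.inr h)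
      have htIoo : t ∈ Ioo 0 T := ⟨lt_of_le_of_lt hs0 h1, lt_of_lt_of_le h2 ht₁T⟩
      exact Or.inr ⟨htIoo, fun hp => htE ⟨⟨h1, h2⟩, hp⟩⟩
    have hkey := key_mono (hLip.neg) hst.le hEderiv hnullE
    have hk2 : -(w t₁) ≤ -(w s₀) := hkey
    have hk3 : (0:ℝ) ≤ w s₀ := hsmem.2
    linarith
  · -- upper bound w t₁ ≤ w₀
    by_contra hcon
    push_neg at hcon
    set A : Set ℝ := Icc 0 t₁ ∩ {t | w t ≤ w₀} with hA
    have hAclosed : IsClosed A := isClosed_Icc.inter (isClosed_le hwc continuous_const)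
    have hA0 : (0:ℝ) ∈ A := ⟨⟨le_refl 0, ht₁0⟩, by simp [hinit]⟩
    have hAbdd : BddAbove A := ⟨t₁, fun t ht => ht.1.2⟩
    set s₀ := sSup A with hs₀
    have hsmem : s₀ ∈ A := hAclosed.csSup_mem ⟨0, hA0⟩ hAbdd
    have hs0 : 0 ≤ s₀ := le_csSup hAbdd hA0
    have hst : s₀ < t₁ := lt_of_le_of_ne hsmem.1.2 (by
      intro h
      exact absurd (h ▸ hsmem.2) (not_le.2 hcon))
    have hbig : ∀ t ∈ Ioc s₀ t₁, w₀ < w t := by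
      intro t ⟨h1, h2⟩
      by_contra h
      push_neg at h
      have : t ∈ A := ⟨⟨le_trans hs0 h1.le, h2⟩, h⟩
      exact absurd (le_csSup hAbdd this) (not_le.2 h1)
    set E : Set ℝ := Ioo s₀ t₁ ∩ {t | P t} with hE
    have hEderiv : ∀ t ∈ E, HasDerivAt w (w' t) t ∧ w' t ≤ 0 := by
      rintro t ⟨htI, htP⟩
      obtain ⟨hd, heq⟩ := htP
      refine ⟨hd, ?_⟩
      have hwt : ε < w t := lt_trans hεw₀ (hbig t ⟨htI.1, htI.2.le⟩)
      have hwtpos : 0 < w t := lt_trans hε hwt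
      have hsgn : signEps ε (w t) = 1 := by
        unfold signEps
        rw [if_neg (by rw [abs_of_pos hwtpos]; exact not_le.2 hwt), abs_of_pos hwtpos,
          div_self hwtpos.ne']
      rw [hsgn] at heq
      nlinarith
    have hnullE : volume (Icc s₀ t₁ \ E) = 0 := by
      refine measure_mono_null (t := {s₀, t₁} ∪ {t | t ∈ Ioo 0 T ∧ ¬ P t}) ?_
        (measure_union_null (((Set.finite_singleton _).insert _).measure_zero _) hnullP)
      intro t ⟨htI, htE⟩
      rcases eq_or_lt_of_le htI.1 with h | h1
      · exact Or.inl (Or.inl h.symm)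
      rcases eq_or_lt_of_le htI.2 with h | h2
      · exact Or.inl (Or.inr h)
      have htIoo : t ∈ Ioo 0 T := ⟨lt_of_le_of_lt hs0 h1, lt_of_lt_of_le h2 ht₁T⟩
      exact Or.inr ⟨htIoo, fun hp => htE ⟨⟨h1, h2⟩, hp⟩⟩
    have hkey := key_mono hLip hst.le hEderiv hnullE
    have hk3 : w s₀ ≤ w₀ := hsmem.2
    linarith
end

section
/- Duality chain rule: let (V, H, V*) be a Hilbert triplet and let L : V* → V be a bounded linear operator that is symmetric (⟨u, Lv⟩ = ⟨v, Lu⟩ for u,v ∈ V*) and satisfies ⟨ψ, Lψ⟩ = ‖ψ‖²_* for an equivalent norm ‖·‖_* on V*. Then for every v ∈ H¹(0,T; V*), the function t ↦ ‖v(t)‖²_* is absolutely continuous and ⟨∂_t v(t), L v(t)⟩ = (1/2)(d/dt)‖v(t)‖²_* for a.e. t ∈ (0,T). -/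
open MeasureTheory Set



section helper

variable {E : Type*} [NormedAddCommGroup E] [NormedSpace ℝ E] [CompleteSpace E]

lemma g1_integrable (B : E →L[ℝ] E →L[ℝ] ℝ)
    {t : ℝ} {f : ℝ → E} (hf : IntegrableOn f (Icc 0 t) volume) :
    Integrable (fun s => B (f s) (∫ r in Ioc (0:ℝ) s, f r))
      (volume.restrict (Ioc (0:ℝ) t)) := by
  have hfI : IntegrableOn f (Ioc (0:ℝ) t) volume := hf.mono_set Ioc_subset_Icc_self
  have hWc : ContinuousOn (fun s => ∫ r in Ioc (0:ℝ) s, f r) (Icc 0 t) :=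
    intervalIntegral.continuousOn_primitive hf
  have hWm : AEStronglyMeasurable (fun s => ∫ r in Ioc (0:ℝ) s, f r)
      (volume.restrict (Ioc (0:ℝ) t)) :=
    (hWc.mono Ioc_subset_Icc_self).aestronglyMeasurable measurableSet_Ioc
  have hgm : AEStronglyMeasurable (fun s => B (f s) (∫ r in Ioc (0:ℝ) s, f r))
      (volume.restrict (Ioc (0:ℝ) t)) :=
    B.aestronglyMeasurable_comp₂ hfI.aestronglyMeasurable hWm
  set M : ℝ := ∫ r in Ioc (0:ℝ) t, ‖f r‖ with hM
  have hM0 : 0 ≤ M := setIntegral_nonneg measurableSet_Ioc fun r _ => norm_nonneg _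
  have hWb : ∀ s ∈ Ioc (0:ℝ) t, ‖∫ r in Ioc (0:ℝ) s, f r‖ ≤ M := by
    intro s hs
    refine (norm_integral_le_integral_norm _).trans ?_
    exact setIntegral_mono_set hfI.norm
      (Filter.Eventually.of_forall fun r => norm_nonneg _)
      (HasSubset.Subset.eventuallyLE (Ioc_subset_Ioc_right hs.2))
  refine Integrable.mono (hfI.norm.const_mul (‖B‖ * M)) hgm ?_
  filter_upwards [ae_restrict_mem measurableSet_Ioc] with s hs
  have h1 : ‖B (f s) (∫ r in Ioc (0:ℝ) s, f r)‖ ≤ ‖B‖ * ‖f s‖ * M := by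
    refine (B.le_opNorm₂ _ _).trans ?_
    exact mul_le_mul_of_nonneg_left (hWb s hs) (by positivity)
  refine h1.trans ?_
  rw [Real.norm_eq_abs, abs_of_nonneg (by positivity)]
  ring_nf
  nlinarith [norm_nonneg (f s), norm_nonneg B]

lemma triangle_square (B : E →L[ℝ] E →L[ℝ] ℝ) (hB : ∀ x y, B x y = B y x)
    {t : ℝ} {f : ℝ → E} (hf : IntegrableOn f (Icc 0 t) volume) :
    2 * ∫ s in Ioc (0:ℝ) t, B (f s) (∫ r in Ioc (0:ℝ) s, f r) =
      B (∫ s in Ioc (0:ℝ) t, f s) (∫ s in Ioc (0:ℝ) t, f s) := by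
  have hfI : IntegrableOn f (Ioc (0:ℝ) t) volume := hf.mono_set Ioc_subset_Icc_self
  set μ := volume.restrict (Ioc (0:ℝ) t) with hμ
  set c : E := ∫ s in Ioc (0:ℝ) t, f s with hc
  set g₁ : ℝ → ℝ := fun s => B (f s) (∫ r in Ioc (0:ℝ) s, f r) with hg₁def
  have hg₁ : Integrable g₁ μ := g1_integrable B hf
  have hBc : Integrable (fun s => B (f s) c) μ := (B.flip c).integrable_comp hfI
  -- key1 : ∫ B (f s) c = B c c
  have key1 : ∫ s, B (f s) c ∂μ = B c c := by
    have := ContinuousLinearMap.integral_comp_comm (B.flip c) hfI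
    simpa [ContinuousLinearMap.flip_apply] using this
  -- split : for s ∈ Ioc 0 t, ∫ r in Ioc s t, B (f s) (f r) = B (f s) c - g₁ s
  have split : ∀ s ∈ Ioc (0:ℝ) t,
      ∫ r in Ioc s t, B (f s) (f r) = B (f s) c - g₁ s := by
    intro s hs
    have hunion : Ioc (0:ℝ) s ∪ Ioc s t = Ioc (0:ℝ) t := Ioc_union_Ioc_eq_Ioc hs.1.le hs.2
    have hi1 : IntegrableOn (fun r => B (f s) (f r)) (Ioc (0:ℝ) s) volume :=
      (B (f s)).integrable_comp (hfI.mono_set (Ioc_subset_Ioc_right hs.2))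
    have hi2 : IntegrableOn (fun r => B (f s) (f r)) (Ioc s t) volume :=
      (B (f s)).integrable_comp (hfI.mono_set (Ioc_subset_Ioc_left hs.1.le))
    have hBfc : B (f s) c = ∫ r in Ioc (0:ℝ) t, B (f s) (f r) :=
      (ContinuousLinearMap.integral_comp_comm (B (f s)) hfI).symm
    have hg₁s : g₁ s = ∫ r in Ioc (0:ℝ) s, B (f s) (f r) :=
      (ContinuousLinearMap.integral_comp_comm (B (f s))
        (hfI.mono_set (Ioc_subset_Ioc_right hs.2))).symm
    have := setIntegral_union (Ioc_disjoint_Ioc_of_le le_rfl) measurableSet_Ioc hi1 hi2 (f := fun r => B (f s) (f r)) (μ := volume)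
    rw [hunion] at this
    rw [hBfc, this, hg₁s]; ring
  -- Fubini step
  set G : ℝ × ℝ → ℝ := fun p => if p.1 < p.2 then B (f p.1) (f p.2) else 0 with hGdef
  have hGm : AEStronglyMeasurable G (μ.prod μ) := by
    have base : AEStronglyMeasurable (fun p : ℝ × ℝ => B (f p.1) (f p.2)) (μ.prod μ) :=
      B.aestronglyMeasurable_comp₂ hfI.aestronglyMeasurable.comp_fst hfI.aestronglyMeasurable.comp_snd
    have : G = {p : ℝ × ℝ | p.1 < p.2}.indicator (fun p => B (f p.1) (f p.2)) := by
      funext p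
      simp [hGdef, Set.indicator_apply]
    rw [this]
    exact base.indicator (measurableSet_lt measurable_fst measurable_snd)
  have hGi : Integrable G (μ.prod μ) := by
    refine Integrable.mono (((hfI.norm.const_mul ‖B‖).mul_prod hfI.norm)) hGm ?_
    refine Filter.Eventually.of_forall fun p => ?_
    have hb : ‖G p‖ ≤ ‖B‖ * ‖f p.1‖ * ‖f p.2‖ := by
      by_cases h : p.1 < p.2
      · simp only [hGdef, if_pos h]
        exact B.le_opNorm₂ _ _
      · simp only [hGdef, if_neg h, norm_zero]
        positivity
    have heq : ‖‖B‖ * ‖f p.1‖ * ‖f p.2‖‖ = ‖B‖ * ‖f p.1‖ * ‖f p.2‖ := by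
      rw [Real.norm_eq_abs, abs_of_nonneg (by positivity)]
    exact hb.trans (le_of_eq heq.symm)
  have inner1 : ∀ s ∈ Ioc (0:ℝ) t,
      ∫ r, G (s, r) ∂μ = ∫ r in Ioc s t, B (f s) (f r) := by
    intro s hs
    have hind : (fun r => G (s, r)) = (Ioi s).indicator (fun r => B (f s) (f r)) := by
      funext r; simp [hGdef, Set.indicator_apply, mem_Ioi]
    have hset : Ioi s ∩ Ioc 0 t = Ioc s t := by
      ext r
      simp only [mem_inter_iff, mem_Ioi, mem_Ioc]
      exact ⟨fun ⟨h1, _, h3⟩ => ⟨h1, h3⟩, fun ⟨h1, h2⟩ => ⟨h1, hs.1.trans h1, h2⟩⟩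
    rw [hind, integral_indicator measurableSet_Ioi, hμ,
      Measure.restrict_restrict measurableSet_Ioi, hset]
  have inner2 : ∀ r ∈ Ioc (0:ℝ) t, ∫ s, G (s, r) ∂μ = g₁ r := by
    intro r hr
    have hind : (fun s => G (s, r)) = (Iio r).indicator (fun s => B (f s) (f r)) := by
      funext s; simp [hGdef, Set.indicator_apply, mem_Iio]
    rw [hind, integral_indicator measurableSet_Iio, hμ,
      Measure.restrict_restrict measurableSet_Iio]
    have hset : Iio r ∩ Ioc 0 t = Ioo (0:ℝ) r := by
      ext s
      simp only [mem_inter_iff, mem_Iio, mem_Ioc, mem_Ioo]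
      exact ⟨fun ⟨h1, h2, _⟩ => ⟨h2, h1⟩, fun ⟨h1, h2⟩ => ⟨h2, h1, (h2.le.trans hr.2)⟩⟩
    rw [hset, ← integral_Ioc_eq_integral_Ioo]
    have hsym' : ∀ s, B (f s) (f r) = B (f r) (f s) := fun s => hB _ _
    rw [integral_congr_ae (Filter.Eventually.of_forall fun s => hsym' s)]
    exact (ContinuousLinearMap.integral_comp_comm (B (f r))
      (hfI.mono_set (Ioc_subset_Ioc_right hr.2)))
  -- ∫ g₂ = ∫ g₁ via swap
  have swap : ∫ s, ∫ r, G (s, r) ∂μ ∂μ = ∫ r, ∫ s, G (s, r) ∂μ ∂μ :=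
    integral_integral_swap (f := fun s r => G (s, r)) (by exact hGi)
  have eq2 : ∫ s, (∫ r in Ioc s t, B (f s) (f r)) ∂μ = ∫ s, g₁ s ∂μ :=
    calc ∫ s, (∫ r in Ioc s t, B (f s) (f r)) ∂μ
        = ∫ s, (∫ r, G (s, r) ∂μ) ∂μ :=
          integral_congr_ae (((ae_restrict_mem measurableSet_Ioc).mono
            fun s hs => (inner1 s hs).symm))
      _ = ∫ r, (∫ s, G (s, r) ∂μ) ∂μ := swap
      _ = ∫ r, g₁ r ∂μ :=
          integral_congr_ae (((ae_restrict_mem measurableSet_Ioc).mono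
            fun r hr => inner2 r hr))
  -- combine
  have eq3 : ∫ s, (∫ r in Ioc s t, B (f s) (f r)) ∂μ = B c c - ∫ s, g₁ s ∂μ := by
    have h := integral_congr_ae (μ := μ) (((ae_restrict_mem measurableSet_Ioc).mono
      fun s hs => split s hs))
    rw [integral_sub hBc hg₁, key1] at h
    exact h
  have : ∫ s, g₁ s ∂μ = B c c - ∫ s, g₁ s ∂μ := eq2.symm.trans eq3
  have hfin : 2 * ∫ s, g₁ s ∂μ = B c c := by linarith
  exact hfin

lemma quad_integrand_integrable (B : E →L[ℝ] E →L[ℝ] ℝ) {f g : ℝ → E} {s : Set ℝ}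
    (hs : MeasurableSet s) (hf : IntegrableOn f s volume)
    (hg : AEStronglyMeasurable g (volume.restrict s))
    {M : ℝ} (hM0 : 0 ≤ M) (hM : ∀ x ∈ s, ‖g x‖ ≤ M) :
    IntegrableOn (fun x => 2 * B (f x) (g x)) s volume := by
  have hm : AEStronglyMeasurable (fun x => 2 * B (f x) (g x)) (volume.restrict s) :=
    (B.aestronglyMeasurable_comp₂ hf.aestronglyMeasurable hg).const_mul 2
  refine Integrable.mono (hf.norm.const_mul (2 * (‖B‖ * M))) hm ?_
  filter_upwards [ae_restrict_mem hs] with x hx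
  have h1 : ‖2 * B (f x) (g x)‖ ≤ 2 * (‖B‖ * ‖f x‖ * M) := by
    rw [norm_mul, Real.norm_ofNat]
    have h2 : ‖B (f x) (g x)‖ ≤ ‖B‖ * ‖f x‖ * M := by
      refine (B.le_opNorm₂ _ _).trans ?_
      exact mul_le_mul_of_nonneg_left (hM x hx) (by positivity)
    linarith
  refine h1.trans ?_
  have : ‖2 * (‖B‖ * M) * ‖f x‖‖ = 2 * (‖B‖ * M) * ‖f x‖ := by
    rw [Real.norm_eq_abs, abs_of_nonneg (by positivity)]
  rw [this]; ring_nf; exact le_rfl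

end helper

set_option maxHeartbeats 1000000 in
set_option synthInstance.maxHeartbeats 400000 in
/-- Duality chain rule.  Here `V` is a real Hilbert space of a Hilbert
triplet `(V, H, V*)`, `X = V*` is its dual, and `L : X → V` is a bounded linear
operator, symmetric (`⟨u, Lv⟩ = ⟨v, Lu⟩`) and such that `⟨ψ, Lψ⟩ = N(ψ)²` for an
equivalent norm `N` on `X` (the prototype being the inverse Laplacian).  If
`v ∈ H¹(0,T; V*)` (encoded by an a.e. derivative `v'` and the fundamental theorem
of calculus), then `t ↦ N(v(t))²` is absolutely continuous (it is a primitive of an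
integrable function) and `⟨∂_t v(t), L v(t)⟩ = ½ (d/dt) N(v(t))²` a.e. on `(0,T)`. -/
theorem duality_chain_rule
    {V : Type*} [NormedAddCommGroup V] [InnerProductSpace ℝ V] [CompleteSpace V]
    (T : ℝ) (hT : 0 < T)
    (L : (V →L[ℝ] ℝ) →L[ℝ] V)
    (hsym : ∀ u v : V →L[ℝ] ℝ, u (L v) = v (L u))
    (N : (V →L[ℝ] ℝ) → ℝ)
    (hN : ∀ ψ : V →L[ℝ] ℝ, ψ (L ψ) = N ψ ^ 2)
    (hNequiv : ∃ c₁ c₂ : ℝ, 0 < c₁ ∧ 0 < c₂ ∧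
      ∀ ψ : V →L[ℝ] ℝ, c₁ * ‖ψ‖ ≤ N ψ ∧ N ψ ≤ c₂ * ‖ψ‖)
    (v v' : ℝ → V →L[ℝ] ℝ)
    (hv' : IntegrableOn v' (Icc 0 T) volume)
    (hderiv : ∀ᵐ t ∂(volume.restrict (Ioo 0 T)), HasDerivAt v (v' t) t)
    (hFTC : ∀ t ∈ Icc (0:ℝ) T, v t = v 0 + ∫ s in (0:ℝ)..t, v' s) :
    (∃ F : ℝ → ℝ, IntegrableOn F (Icc 0 T) volume ∧
      ∀ t ∈ Icc (0:ℝ) T, N (v t) ^ 2 = N (v 0) ^ 2 + ∫ s in (0:ℝ)..t, F s) ∧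
    ∀ᵐ t ∂(volume.restrict (Ioo 0 T)),
      HasDerivAt (fun s => N (v s) ^ 2) (2 * (v' t) (L (v t))) t := by
  -- the continuous bilinear form B φ ψ = φ (L ψ)
  set B : (V →L[ℝ] ℝ) →L[ℝ] (V →L[ℝ] ℝ) →L[ℝ] ℝ :=
    ((ContinuousLinearMap.apply ℝ ℝ (E := V)).comp L).flip with hBdef
  have hBapp : ∀ φ ψ : V →L[ℝ] ℝ, B φ ψ = φ (L ψ) := fun φ ψ => rfl
  have hBsym : ∀ x y : V →L[ℝ] ℝ, B x y = B y x := by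
    intro x y; rw [hBapp, hBapp, hsym]
  -- continuity of v on [0,T]
  have hprim : ContinuousOn (fun t => ∫ s in Ioc (0:ℝ) t, v' s) (Icc 0 T) :=
    intervalIntegral.continuousOn_primitive hv'
  have hioc : ∀ t ∈ Icc (0:ℝ) T, (∫ s in (0:ℝ)..t, v' s) = ∫ s in Ioc (0:ℝ) t, v' s :=
    fun t ht => intervalIntegral.integral_of_le ht.1
  have hvc : ContinuousOn v (Icc 0 T) := by
    have h1 : ContinuousOn (fun t => v 0 + ∫ s in Ioc (0:ℝ) t, v' s) (Icc 0 T) :=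
      continuousOn_const.add hprim
    refine h1.congr fun t ht => ?_
    rw [hFTC t ht, hioc t ht]
  obtain ⟨M, hM⟩ := isCompact_Icc.exists_bound_of_continuousOn hvc
  have hM0 : 0 ≤ M := le_trans (norm_nonneg _) (hM 0 ⟨le_rfl, hT.le⟩)
  -- the candidate integrand
  set F : ℝ → ℝ := fun s => 2 * (v' s) (L (v s)) with hFdef
  have hvm : AEStronglyMeasurable v (volume.restrict (Icc 0 T)) :=
    hvc.aestronglyMeasurable measurableSet_Icc
  have hFint : IntegrableOn F (Icc 0 T) volume :=
    quad_integrand_integrable B measurableSet_Icc hv' hvm hM0 hM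
  constructor
  · refine ⟨F, hFint, fun t ht => ?_⟩
    have hvt' : IntegrableOn v' (Icc 0 t) volume := hv'.mono_set (Icc_subset_Icc_right ht.2)
    have hvtI : IntegrableOn v' (Ioc 0 t) volume := hvt'.mono_set Ioc_subset_Icc_self
    set c : V →L[ℝ] ℝ := ∫ s in Ioc (0:ℝ) t, v' s with hcdef
    have hvt : v t = v 0 + c := by rw [hFTC t ht, hioc t ht]
    -- the integral of F
    have hIF : ∫ s in (0:ℝ)..t, F s = ∫ s in Ioc (0:ℝ) t, F s :=
      intervalIntegral.integral_of_le ht.1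
    have hsplit : ∀ s ∈ Ioc (0:ℝ) t,
        F s = 2 * (v' s) (L (v 0)) + 2 * B (v' s) (∫ r in Ioc (0:ℝ) s, v' r) := by
      intro s hs
      have hs' : s ∈ Icc (0:ℝ) T := ⟨hs.1.le, hs.2.trans ht.2⟩
      have : v s = v 0 + ∫ r in Ioc (0:ℝ) s, v' r := by
        rw [hFTC s hs', intervalIntegral.integral_of_le hs.1.le]
      show 2 * (v' s) (L (v s)) = _
      rw [this]
      simp only [map_add, ContinuousLinearMap.add_apply, hBapp]
      ring
    have hI1 : Integrable (fun s => 2 * (v' s) (L (v 0))) (volume.restrict (Ioc 0 t)) := by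
      have : Integrable (fun s => (ContinuousLinearMap.apply ℝ ℝ (L (v 0))) (v' s))
          (volume.restrict (Ioc 0 t)) :=
        (ContinuousLinearMap.apply ℝ ℝ (L (v 0))).integrable_comp hvtI
      exact (this.const_mul 2)
    have hI2 : Integrable (fun s => 2 * B (v' s) (∫ r in Ioc (0:ℝ) s, v' r))
        (volume.restrict (Ioc 0 t)) := (g1_integrable B hvt').const_mul 2
    have hIeq : ∫ s in Ioc (0:ℝ) t, F s
        = (∫ s in Ioc (0:ℝ) t, 2 * (v' s) (L (v 0)))
          + ∫ s in Ioc (0:ℝ) t, 2 * B (v' s) (∫ r in Ioc (0:ℝ) s, v' r) := by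
      rw [← integral_add hI1 hI2]
      exact integral_congr_ae (((ae_restrict_mem measurableSet_Ioc).mono
        fun s hs => by rw [hsplit s hs]))
    have hterm1 : ∫ s in Ioc (0:ℝ) t, 2 * (v' s) (L (v 0)) = 2 * c (L (v 0)) := by
      rw [integral_const_mul]
      congr 1
      exact ContinuousLinearMap.integral_comp_comm (ContinuousLinearMap.apply ℝ ℝ (L (v 0))) hvtI
    have hterm2 : ∫ s in Ioc (0:ℝ) t, 2 * B (v' s) (∫ r in Ioc (0:ℝ) s, v' r) = B c c := by
      rw [integral_const_mul]
      exact triangle_square B hBsym hvt'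
    rw [← hN, ← hN, hvt, hIF, hIeq, hterm1, hterm2]
    have hcross : (v 0) (L c) = c (L (v 0)) := hsym _ _
    have hBcc : B c c = c (L c) := hBapp _ _
    simp only [map_add, ContinuousLinearMap.add_apply]
    rw [hBcc, hcross]
    ring
  · filter_upwards [hderiv] with t htd
    have hLv : HasDerivAt (fun s => L (v s)) (L (v' t)) t :=
      L.hasFDerivAt.comp_hasDerivAt t htd
    have hprod : HasDerivAt (fun s => (v s) (L (v s)))
        ((v' t) (L (v t)) + (v t) (L (v' t))) t := htd.clm_apply hLv
    have hfun : (fun s => N (v s) ^ 2) = fun s => (v s) (L (v s)) :=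
      funext fun s => (hN (v s)).symm
    rw [hfun]
    have hval : (v' t) (L (v t)) + (v t) (L (v' t)) = 2 * (v' t) (L (v t)) := by
      rw [hsym (v t) (v' t)]; ring
    rw [← hval]
    exact hprod
end
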